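/- Let k > 0 and define x(λ) = λ + k − 3 + (k−3)/(2λ) for λ > 0. Then the residual R(λ) = λ·x'(λ)·(x(λ) − k − λ + 4) + x(λ)·(x(λ) − k − λ + 2) obtained by substituting x into the mode ODE satisfies λ·R(λ) bounded as λ → ∞; in particular R(λ) → 0 as λ → ∞, so x(λ) = λ + k − 3 + (k−3)/(2λ) is an approximate solution of the mode equation with error of order O(1/λ). -/

import Mathlib

/-- The approximate mode `x(λ) = λ + k - 3 + (k - 3)/(2λ)`. -/
noncomputable def xApprox (k : ℝ) : ℝ → ℝ :=
  fun lam => lam + k - 3 + (k - 3) / (2 * lam)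

/-- The residual obtained by substituting `xApprox k` into the mode ODE. -/
noncomputable def resR (k : ℝ) : ℝ → ℝ :=
  fun lam =>
    lam * deriv (xApprox k) lam * (xApprox k lam - k - lam + 4) +
      xApprox k lam * (xApprox k lam - k - lam + 2)

open Filter Topology

lemma hasDerivAt_xApprox (k : ℝ) {lam : ℝ} (h : lam ≠ 0) :
    HasDerivAt (xApprox k) (1 - (k - 3) / (2 * lam ^ 2)) lam := by
  have hform : xApprox k = fun x => x + k - 3 + (k - 3) / 2 * x⁻¹ := by
    ext x; simp only [xApprox]; ring
  rw [hform]
  exact ((((hasDerivAt_id' lam).add_const k).sub_const 3).add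
    ((hasDerivAt_inv h).const_mul _)).congr_deriv (by ring)

lemma mul_resR_eq (k : ℝ) {lam : ℝ} (h : lam ≠ 0) :
    lam * resR k lam = (k - 3) * (k - 5) / 2 := by
  simp only [resR, xApprox, (hasDerivAt_xApprox k h).deriv]
  field_simp
  ring

lemma tendsto_zero_of_eventually_abs_mul_le {f : ℝ → ℝ} {C : ℝ}
    (h : ∀ᶠ x in atTop, |x * f x| ≤ C) : Tendsto f atTop (𝓝 0) := by
  refine squeeze_zero_norm' (a := fun x => C / x) ?_ (tendsto_const_nhds.div_atTop tendsto_id)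
  filter_upwards [h, eventually_gt_atTop 0] with x hx hpos
  rw [Real.norm_eq_abs, le_div_iff₀ hpos]
  calc |f x| * x = |x * f x| := by rw [abs_mul, abs_of_pos hpos, mul_comm]
    _ ≤ C := hx

theorem stmt_6_general (k : ℝ) :
    (∃ C : ℝ, ∀ᶠ lam in Filter.atTop, |lam * resR k lam| ≤ C) ∧
      Filter.Tendsto (resR k) Filter.atTop (nhds 0) := by
  have hbound : ∀ᶠ lam in atTop, |lam * resR k lam| ≤ |(k - 3) * (k - 5) / 2| := by
    filter_upwards [eventually_ne_atTop 0] with lam h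
    rw [mul_resR_eq k h]
  exact ⟨⟨_, hbound⟩, tendsto_zero_of_eventually_abs_mul_le hbound⟩

theorem stmt_6 (k : ℝ) (hk : 0 < k) :
    (∃ C : ℝ, ∀ᶠ lam in Filter.atTop, |lam * resR k lam| ≤ C) ∧
      Filter.Tendsto (resR k) Filter.atTop (nhds 0) :=
  stmt_6_general k
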